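/- arXiv:1207.3309 — 2 statements merged into one kernel-verified Lean document; each statement's English description precedes it below -/
import Mathlib

section
/- Let V = V₀ ⊕ V₁ be a Z/2-graded vector space and μ a partition. The i-th graded piece (in the Z-grading by V₁-degree) of the Schur module of the superspace, S_μ(V₀ ⊕ V₁), decomposes as a GL(V₀) × GL(V₁)-representation as ⊕_{ν ⊆ μ, |ν| = i} S_{μ/ν}(V₀) ⊗ S_{ν†}(V₁), where ν† is the transpose partition. Equivalently, on the level of characters: the super Schur function satisfies s_μ(x/y) = Σ_{ν ⊆ μ} s_{μ/ν}(x) s_{ν†}(y). -/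
open scoped Classical

/-- Whether `T : Fin b → Fin a → Fin N` is a semistandard Young tableau of skew shape
`μ/ν` (inside the `b × a` rectangle), normalized to be `0` outside the shape:
rows weakly increase, columns strictly increase. -/
def IsSkewSSYT (b a N : ℕ) (μ ν : Fin b → ℕ) (T : Fin b → Fin a → Fin N) : Prop :=
  (∀ (i : Fin b) (j₁ j₂ : Fin a), ν i ≤ (j₁ : ℕ) → (j₁ : ℕ) ≤ (j₂ : ℕ) →
      (j₂ : ℕ) < μ i → T i j₁ ≤ T i j₂) ∧
  (∀ (i₁ i₂ : Fin b) (j : Fin a), i₁ < i₂ → ν i₁ ≤ (j : ℕ) → (j : ℕ) < μ i₂ →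
      T i₁ j < T i₂ j) ∧
  (∀ (i : Fin b) (j : Fin a), ((j : ℕ) < ν i ∨ μ i ≤ (j : ℕ)) → (T i j : ℕ) = 0)

/-- The skew Schur polynomial `s_{μ/ν}(x₁,…,x_N)`. -/
noncomputable def skewSchur (b a N : ℕ) (μ ν : Fin b → ℕ) : MvPolynomial (Fin N) ℚ :=
  ∑ T : Fin b → Fin a → Fin N,
    if IsSkewSSYT b a N μ ν T then
      ∏ i : Fin b, ∏ j ∈ Finset.univ.filter (fun j : Fin a => ν i ≤ (j : ℕ) ∧ (j : ℕ) < μ i),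
        MvPolynomial.X (T i j)
    else 0

/-- Rank of a letter in the super alphabet: the odd letters `y₁ < ⋯ < y_q` come first,
then the even letters `x₁ < ⋯ < x_p`. -/
def superRank (p q : ℕ) : Fin p ⊕ Fin q → ℕ :=
  Sum.elim (fun i => q + (i : ℕ)) (fun j => (j : ℕ))

/-- Whether `T` is a super semistandard tableau of shape `μ`: entries weakly increase
along rows with repeats allowed only for even (`x`) letters, and strictly increase
along columns with repeats allowed only for odd (`y`) letters. Normalized to the
fixed value `x₀` outside the shape. -/
def IsSuperSSYT (b a p q : ℕ) (hp : 0 < p) (μ : Fin b → ℕ)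
    (T : Fin b → Fin a → (Fin p ⊕ Fin q)) : Prop :=
  (∀ (i : Fin b) (j₁ j₂ : Fin a), (j₁ : ℕ) < (j₂ : ℕ) → (j₂ : ℕ) < μ i →
      (superRank p q (T i j₁) < superRank p q (T i j₂) ∨
        (T i j₁ = T i j₂ ∧ (T i j₁).isLeft = true))) ∧
  (∀ (i₁ i₂ : Fin b) (j : Fin a), i₁ < i₂ → (j : ℕ) < μ i₂ →
      (superRank p q (T i₁ j) < superRank p q (T i₂ j) ∨
        (T i₁ j = T i₂ j ∧ (T i₁ j).isRight = true))) ∧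
  (∀ (i : Fin b) (j : Fin a), μ i ≤ (j : ℕ) → T i j = Sum.inl ⟨0, hp⟩)

/-- The super Schur polynomial `s_μ(x/y)`: the generating function of super
semistandard tableaux of shape `μ` in even variables `x₁,…,x_p` and odd variables
`y₁,…,y_q`. -/
noncomputable def superSchur (b a p q : ℕ) (hp : 0 < p) (μ : Fin b → ℕ) :
    MvPolynomial (Fin p ⊕ Fin q) ℚ :=
  ∑ T : Fin b → Fin a → (Fin p ⊕ Fin q),
    if IsSuperSSYT b a p q hp μ T then
      ∏ i : Fin b, ∏ j ∈ Finset.univ.filter (fun j : Fin a => (j : ℕ) < μ i),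
        MvPolynomial.X (T i j)
    else 0

/-- The transpose of `ν : Fin b → ℕ` as a partition with at most `a` parts. -/
def transposeP (b a : ℕ) (ν : Fin b → ℕ) : Fin a → ℕ :=
  fun j => (Finset.univ.filter fun i : Fin b => (j : ℕ) < ν i).card

/-!
In a super semistandard tableau the odd letters `y` come before the even letters `x`, so in each
row they fill an initial segment; the lengths `ν` of these segments form a partition contained in
`μ`. The even entries form a semistandard tableau of skew shape `μ/ν` in the `x`, and the odd
entries, which weakly increase down columns and strictly increase along rows, form after
transposition a semistandard tableau of shape `ν†` in the `y`. Conversely every such pair glues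
back to a super tableau, and the monomial of a super tableau is the product of the monomials of
its two parts.
-/

open Finset

theorem Fin.lt_card_filter_iff_of_antitone {n : ℕ} {P : Fin n → Prop} [DecidablePred P]
    (hP : Antitone P) (j : Fin n) : (j : ℕ) < #{k | P k} ↔ P j := by
  refine ⟨fun hj => ?_, fun hPj => ?_⟩
  · by_contra hPj
    have : #{k | P k} ≤ #(Iio j) :=
      card_le_card fun k hk =>
        mem_Iio.2 <| lt_of_not_ge fun hjk => hPj (hP hjk (mem_filter.1 hk).2)
    rw [Fin.card_Iio] at this
    omega
  · calc (j : ℕ) < #(Iic j) := by simp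
      _ ≤ #{k | P k} := card_le_card fun k hk => mem_filter.2 ⟨mem_univ k, hP (mem_Iic.1 hk) hPj⟩

theorem lt_transposeP_iff {b a : ℕ} {ν : Fin b → ℕ} (hν : Antitone ν) (i : Fin b) (j : Fin a) :
    (i : ℕ) < transposeP b a ν j ↔ (j : ℕ) < ν i :=
  Fin.lt_card_filter_iff_of_antitone (fun _ _ h h' => lt_of_lt_of_le h' (hν h)) i

theorem Fintype.sum_sum_sum_ite_and_mul {R α β γ : Type*} [CommSemiring R] [Fintype α]
    [Fintype β] [Fintype γ] (P : α → Prop) (Q : α → β → Prop) (S : α → γ → Prop)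
    [DecidablePred P] [∀ x, DecidablePred (Q x)] [∀ x, DecidablePred (S x)]
    (g : α → β → R) (h : α → γ → R) :
    ∑ x, ∑ y, ∑ w, (if P x ∧ Q x y ∧ S x w then g x y * h x w else 0)
      = ∑ x, if P x then (∑ y, if Q x y then g x y else 0) * ∑ w, if S x w then h x w else 0
        else 0 := by
  refine Finset.sum_congr rfl fun x _ => ?_
  by_cases hP : P x
  · rw [if_pos hP, sum_mul_sum]
    refine Finset.sum_congr rfl fun y _ => Finset.sum_congr rfl fun w _ => ?_
    by_cases hQ : Q x y <;> by_cases hS : S x w <;> simp [hP, hQ, hS]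
  · simp [hP]

section Split

variable {b a p q : ℕ}

@[simp] theorem superRank_inl (x : Fin p) : superRank p q (Sum.inl x) = q + x := rfl

@[simp] theorem superRank_inr (y : Fin q) : superRank p q (Sum.inr y) = y := rfl

theorem superRank_inr_lt_inl (y : Fin q) (x : Fin p) :
    superRank p q (Sum.inr y) < superRank p q (Sum.inl x) :=
  y.isLt.trans_le (Nat.le_add_right q x)

theorem isRight_of_superRank_le {s t : Fin p ⊕ Fin q} (h : superRank p q s ≤ superRank p q t)
    (ht : t.isRight) : s.isRight := by
  cases s <;> cases t <;> simp_all; omega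

theorem superRank_le_of_lt_or_eq {s t : Fin p ⊕ Fin q} {P : Prop}
    (h : superRank p q s < superRank p q t ∨ s = t ∧ P) : superRank p q s ≤ superRank p q t := by
  rcases h with h | ⟨rfl, -⟩
  · exact h.le
  · rfl

def oddShape (T : Fin b → Fin a → Fin p ⊕ Fin q) (i : Fin b) : Fin (a + 1) :=
  ⟨#{j | (T i j).isRight}, Nat.lt_succ_of_le <| (card_le_univ _).trans (Fintype.card_fin a).le⟩

def evenPart (hp : 0 < p) (T : Fin b → Fin a → Fin p ⊕ Fin q) : Fin b → Fin a → Fin p :=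
  fun i j => Sum.elim id (fun _ => ⟨0, hp⟩) (T i j)

def oddPart (hq : 0 < q) (T : Fin b → Fin a → Fin p ⊕ Fin q) : Fin a → Fin b → Fin q :=
  fun j i => Sum.elim (fun _ => ⟨0, hq⟩) id (T i j)

def glue (ν : Fin b → ℕ) (Tx : Fin b → Fin a → Fin p) (Ty : Fin a → Fin b → Fin q) :
    Fin b → Fin a → Fin p ⊕ Fin q :=
  fun i j => if (j : ℕ) < ν i then Sum.inr (Ty j i) else Sum.inl (Tx i j)

end Split

namespace IsSuperSSYT

variable {b a p q : ℕ} {hp : 0 < p} {μ : Fin b → ℕ} {T : Fin b → Fin a → Fin p ⊕ Fin q}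

theorem superRank_le_of_row (hT : IsSuperSSYT b a p q hp μ T) {i : Fin b} {j₁ j₂ : Fin a}
    (h : j₁ ≤ j₂) (h₂ : (j₂ : ℕ) < μ i) : superRank p q (T i j₁) ≤ superRank p q (T i j₂) := by
  rcases h.lt_or_eq with h | rfl
  · exact superRank_le_of_lt_or_eq (hT.1 i j₁ j₂ h h₂)
  · rfl

theorem superRank_le_of_col (hT : IsSuperSSYT b a p q hp μ T) {i₁ i₂ : Fin b} {j : Fin a}
    (h : i₁ ≤ i₂) (h₂ : (j : ℕ) < μ i₂) : superRank p q (T i₁ j) ≤ superRank p q (T i₂ j) := by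
  rcases h.lt_or_eq with h | rfl
  · exact superRank_le_of_lt_or_eq (hT.2.1 i₁ i₂ j h h₂)
  · rfl

theorem lt_of_isRight (hT : IsSuperSSYT b a p q hp μ T) {i : Fin b} {j : Fin a}
    (h : (T i j).isRight) : (j : ℕ) < μ i := by
  by_contra hj
  simp [hT.2.2 i j (not_lt.1 hj)] at h

theorem isRight_iff_lt_oddShape (hT : IsSuperSSYT b a p q hp μ T) (i : Fin b) (j : Fin a) :
    (T i j).isRight ↔ (j : ℕ) < oddShape T i :=
  (Fin.lt_card_filter_iff_of_antitone (fun _ _ h h₂ =>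
    isRight_of_superRank_le (hT.superRank_le_of_row h (hT.lt_of_isRight h₂)) h₂) j).symm

theorem oddShape_le (hT : IsSuperSSYT b a p q hp μ T) (i : Fin b) : (oddShape T i : ℕ) ≤ μ i :=
  calc #{j | (T i j).isRight} ≤ #{j : Fin a | (j : ℕ) < μ i} :=
        card_le_card (monotone_filter_right _ fun _ _ => hT.lt_of_isRight)
    _ = min a (μ i) := Fin.card_filter_val_lt
    _ ≤ μ i := min_le_right _ _

theorem oddShape_antitone (hT : IsSuperSSYT b a p q hp μ T) :
    Antitone fun i => (oddShape T i : ℕ) := fun _ _ h =>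
  show #{j | (T _ j).isRight} ≤ #{j | (T _ j).isRight} from
    card_le_card <| monotone_filter_right _ fun _ _ h₂ =>
      isRight_of_superRank_le (hT.superRank_le_of_col h (hT.lt_of_isRight h₂)) h₂

theorem eq_inl_evenPart (hT : IsSuperSSYT b a p q hp μ T) {i : Fin b} {j : Fin a}
    (h : ¬ (j : ℕ) < oddShape T i) : T i j = Sum.inl (evenPart hp T i j) := by
  rw [← hT.isRight_iff_lt_oddShape] at h
  cases hT' : T i j <;> simp_all [evenPart]

theorem eq_inr_oddPart (hT : IsSuperSSYT b a p q hp μ T) (hq : 0 < q) {i : Fin b} {j : Fin a}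
    (h : (j : ℕ) < oddShape T i) : T i j = Sum.inr (oddPart hq T j i) := by
  rw [← hT.isRight_iff_lt_oddShape] at h
  cases hT' : T i j <;> simp_all [oddPart]

theorem glue_split (hT : IsSuperSSYT b a p q hp μ T) (hq : 0 < q) :
    glue (fun i => oddShape T i) (evenPart hp T) (oddPart hq T) = T := by
  funext i j
  by_cases h : (j : ℕ) < oddShape T i
  · simp only [glue, if_pos h, ← hT.eq_inr_oddPart hq h]
  · simp only [glue, if_neg h, ← hT.eq_inl_evenPart h]

theorem isSkewSSYT_evenPart (hT : IsSuperSSYT b a p q hp μ T) :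
    IsSkewSSYT b a p μ (fun i => oddShape T i) (evenPart hp T) := by
  refine ⟨fun i j₁ j₂ hν h₁₂ h₂ => ?_, fun i₁ i₂ j h₁₂ hν h₂ => ?_, fun i j hj => ?_⟩
  · have hle := hT.superRank_le_of_row (show j₁ ≤ j₂ from h₁₂) h₂
    rwa [hT.eq_inl_evenPart (not_lt.2 hν), hT.eq_inl_evenPart (not_lt.2 (hν.trans h₁₂)),
      superRank_inl, superRank_inl, Nat.add_le_add_iff_left] at hle
  · have hν₂ := hν.trans' (hT.oddShape_antitone h₁₂.le)
    rcases hT.2.1 i₁ i₂ j h₁₂ h₂ with hlt | ⟨-, hright⟩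
    · rwa [hT.eq_inl_evenPart (not_lt.2 hν), hT.eq_inl_evenPart (not_lt.2 hν₂),
        superRank_inl, superRank_inl, Nat.add_lt_add_iff_left] at hlt
    · simp [hT.eq_inl_evenPart (not_lt.2 hν)] at hright
  · rcases hj with hj | hj
    · have hright := (hT.isRight_iff_lt_oddShape i j).2 hj
      cases hT' : T i j <;> simp_all [evenPart]
    · simp [evenPart, hT.2.2 i j hj]

theorem isSkewSSYT_oddPart (hT : IsSuperSSYT b a p q hp μ T) (hq : 0 < q) :
    IsSkewSSYT a b q (transposeP b a fun i => oddShape T i) (fun _ => 0) (oddPart hq T) := by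
  have hν := hT.oddShape_antitone
  refine ⟨fun j i₁ i₂ _ h₁₂ h₂ => ?_, fun j₁ j₂ i h₁₂ _ h₂ => ?_, fun j i hj => ?_⟩
  · rw [lt_transposeP_iff hν] at h₂
    have hle := hT.superRank_le_of_col (show i₁ ≤ i₂ from h₁₂) (h₂.trans_le (hT.oddShape_le i₂))
    rwa [hT.eq_inr_oddPart hq h₂, hT.eq_inr_oddPart hq (h₂.trans_le (hν h₁₂)),
      superRank_inr, superRank_inr] at hle
  · rw [lt_transposeP_iff hν] at h₂
    have h₁ : (j₁ : ℕ) < oddShape T i := lt_trans h₁₂ h₂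
    rcases hT.1 i j₁ j₂ h₁₂ (h₂.trans_le (hT.oddShape_le i)) with hlt | ⟨-, hleft⟩
    · rwa [hT.eq_inr_oddPart hq h₁, hT.eq_inr_oddPart hq h₂, superRank_inr, superRank_inr] at hlt
    · simp [hT.eq_inr_oddPart hq h₁] at hleft
  · rcases hj with hj | hj
    · simp at hj
    · have hj' : ¬ (j : ℕ) < oddShape T i := fun h => hj.not_gt ((lt_transposeP_iff hν i j).2 h)
      simp [oddPart, hT.eq_inl_evenPart hj']

end IsSuperSSYT

section Glue

variable {b a p q : ℕ} {ν : Fin b → ℕ} {Tx : Fin b → Fin a → Fin p} {Ty : Fin a → Fin b → Fin q}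

theorem isSuperSSYT_glue (hp : 0 < p) {μ : Fin b → ℕ} (hν : Antitone ν) (hνμ : ∀ i, ν i ≤ μ i)
    (hx : IsSkewSSYT b a p μ ν Tx) (hy : IsSkewSSYT a b q (transposeP b a ν) (fun _ => 0) Ty) :
    IsSuperSSYT b a p q hp μ (glue ν Tx Ty) := by
  refine ⟨fun i j₁ j₂ h₁₂ h₂ => ?_, fun i₁ i₂ j h₁₂ h₂ => ?_, fun i j hj => ?_⟩
  · by_cases c₂ : (j₂ : ℕ) < ν i
    · have := hy.2.1 j₁ j₂ i h₁₂ (Nat.zero_le _) ((lt_transposeP_iff hν i j₂).2 c₂)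
      simp [glue, c₂, h₁₂.trans c₂, this]
    by_cases c₁ : (j₁ : ℕ) < ν i
    · left
      simpa only [glue, if_pos c₁, if_neg c₂] using superRank_inr_lt_inl (Ty j₁ i) (Tx i j₂)
    · have := hx.1 i j₁ j₂ (not_lt.1 c₁) h₁₂.le h₂
      simpa [glue, c₁, c₂] using this.lt_or_eq
  · by_cases c₂ : (j : ℕ) < ν i₂
    · have := hy.1 j i₁ i₂ (Nat.zero_le _) h₁₂.le ((lt_transposeP_iff hν i₂ j).2 c₂)
      simpa [glue, c₂, c₂.trans_le (hν h₁₂.le)] using this.lt_or_eq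
    by_cases c₁ : (j : ℕ) < ν i₁
    · left
      simpa only [glue, if_pos c₁, if_neg c₂] using superRank_inr_lt_inl (Ty j i₁) (Tx i₂ j)
    · have := hx.2.1 i₁ i₂ j h₁₂ (not_lt.1 c₁) h₂
      simp [glue, c₁, c₂, this]
  · have hj' : ¬ (j : ℕ) < ν i := fun h => (h.trans_le (hνμ i)).not_ge hj
    simp [glue, hj', Fin.ext_iff, hx.2.2 i j (Or.inr hj)]

theorem oddShape_glue (hνa : ∀ i, ν i ≤ a) (i : Fin b) :
    (oddShape (glue ν Tx Ty) i : ℕ) = ν i := by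
  have hodd : #{j | (glue ν Tx Ty i j).isRight} = #{j : Fin a | (j : ℕ) < ν i} := by
    refine congrArg card (filter_congr fun j _ => ?_)
    by_cases h : (j : ℕ) < ν i <;> simp [glue, h]
  simp [oddShape, hodd, Fin.card_filter_val_lt, hνa i]

theorem evenPart_glue (hp : 0 < p) {μ : Fin b → ℕ} (hx : IsSkewSSYT b a p μ ν Tx) :
    evenPart hp (glue ν Tx Ty) = Tx := by
  funext i j
  by_cases h : (j : ℕ) < ν i
  · simp [evenPart, glue, h, Fin.ext_iff, hx.2.2 i j (Or.inl h)]
  · simp [evenPart, glue, h]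

theorem oddPart_glue (hq : 0 < q) (hν : Antitone ν)
    (hy : IsSkewSSYT a b q (transposeP b a ν) (fun _ => 0) Ty) :
    oddPart hq (glue ν Tx Ty) = Ty := by
  funext j i
  by_cases h : (j : ℕ) < ν i
  · simp [oddPart, glue, h]
  · have hi : transposeP b a ν j ≤ i := not_lt.1 fun h' => h ((lt_transposeP_iff hν i j).1 h')
    simp [oddPart, glue, h, Fin.ext_iff, hy.2.2 j i (Or.inr hi)]

theorem prod_glue {M : Type*} [CommMonoid M] (f : Fin p ⊕ Fin q → M) {μ : Fin b → ℕ}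
    (hν : Antitone ν) (hνμ : ∀ i, ν i ≤ μ i) :
    ∏ i, ∏ j ∈ {j : Fin a | (j : ℕ) < μ i}, f (glue ν Tx Ty i j)
      = (∏ i, ∏ j ∈ {j : Fin a | ν i ≤ (j : ℕ) ∧ (j : ℕ) < μ i}, f (Sum.inl (Tx i j)))
        * ∏ j, ∏ i ∈ {i : Fin b | (0 : ℕ) ≤ (i : ℕ) ∧ (i : ℕ) < transposeP b a ν j},
            f (Sum.inr (Ty j i)) :=
  calc ∏ i, ∏ j ∈ {j : Fin a | (j : ℕ) < μ i}, f (glue ν Tx Ty i j)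
      = ∏ i, ∏ j : Fin a, ((if ν i ≤ (j : ℕ) ∧ (j : ℕ) < μ i then f (Sum.inl (Tx i j)) else 1)
          * if (j : ℕ) < ν i then f (Sum.inr (Ty j i)) else 1) := by
        refine prod_congr rfl fun i _ => ?_
        rw [prod_filter]
        refine prod_congr rfl fun j _ => ?_
        by_cases h : (j : ℕ) < ν i
        · simp [glue, h, h.trans_le (hνμ i)]
        · by_cases h' : (j : ℕ) < μ i <;> simp [glue, h, h', not_lt.1 h]
    _ = (∏ i, ∏ j ∈ {j : Fin a | ν i ≤ (j : ℕ) ∧ (j : ℕ) < μ i}, f (Sum.inl (Tx i j)))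
          * ∏ i, ∏ j ∈ {j : Fin a | (j : ℕ) < ν i}, f (Sum.inr (Ty j i)) := by
        simp only [prod_mul_distrib, prod_filter]
    _ = _ := by
        congr 1
        exact prod_comm' fun i j => by simp [lt_transposeP_iff hν]

end Glue

theorem MvPolynomial.rename_skewSchur {σ : Type*} {N : ℕ} (f : Fin N → σ) (b a : ℕ)
    (μ ν : Fin b → ℕ) :
    rename f (skewSchur b a N μ ν) = ∑ T : Fin b → Fin a → Fin N,
      if IsSkewSSYT b a N μ ν T then
        ∏ i, ∏ j ∈ {j : Fin a | ν i ≤ (j : ℕ) ∧ (j : ℕ) < μ i}, X (f (T i j))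
      else 0 := by
  simp only [skewSchur, map_sum, apply_ite (rename f), map_prod, rename_X, map_zero]

section Decomposition

variable {R : Type*} [CommSemiring R] {b a p q : ℕ} (f : Fin p ⊕ Fin q → R) (μ : Fin b → ℕ)

theorem sum_superSSYT_eq_sum_split (hp : 0 < p) (hq : 0 < q) :
    ∑ T ∈ {T | IsSuperSSYT b a p q hp μ T}, ∏ i, ∏ j ∈ {j : Fin a | (j : ℕ) < μ i}, f (T i j)
      = ∑ z ∈ {z : (Fin b → Fin (a + 1)) × (Fin b → Fin a → Fin p) × (Fin a → Fin b → Fin q) |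
            ((Antitone fun i => (z.1 i : ℕ)) ∧ ∀ i, (z.1 i : ℕ) ≤ μ i) ∧
            IsSkewSSYT b a p μ (fun i => z.1 i) z.2.1 ∧
            IsSkewSSYT a b q (transposeP b a fun i => z.1 i) (fun _ => 0) z.2.2},
          (∏ i, ∏ j ∈ {j : Fin a | (z.1 i : ℕ) ≤ (j : ℕ) ∧ (j : ℕ) < μ i},
              f (Sum.inl (z.2.1 i j)))
          * ∏ j, ∏ i ∈ {i : Fin b | (0 : ℕ) ≤ (i : ℕ) ∧
              (i : ℕ) < transposeP b a (fun i => z.1 i) j}, f (Sum.inr (z.2.2 j i)) := by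
  refine sum_nbij' (fun T => (oddShape T, evenPart hp T, oddPart hq T))
    (fun z => glue (fun i => z.1 i) z.2.1 z.2.2) ?_ ?_ ?_ ?_ ?_ <;>
    intro z hz <;> simp only [mem_filter, mem_univ, true_and] at hz ⊢
  · exact ⟨⟨hz.oddShape_antitone, hz.oddShape_le⟩, hz.isSkewSSYT_evenPart,
      hz.isSkewSSYT_oddPart hq⟩
  · obtain ⟨⟨hν, hνμ⟩, hx, hy⟩ := hz
    exact isSuperSSYT_glue hp hν hνμ hx hy
  · exact hz.glue_split hq
  · obtain ⟨⟨hν, -⟩, hx, hy⟩ := hz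
    refine Prod.ext (funext fun i => Fin.ext ?_)
      (Prod.ext (evenPart_glue hp hx) (oddPart_glue hq hν hy))
    exact oddShape_glue (fun i => Nat.lt_succ_iff.1 (z.1 i).isLt) i
  · conv_lhs => rw [← hz.glue_split hq]
    exact prod_glue f hz.oddShape_antitone hz.oddShape_le

end Decomposition

theorem superSchur_decomposition_general (b a p q : ℕ) (hp : 0 < p) (hq : 0 < q)
    (μ : Fin b → ℕ) :
    superSchur b a p q hp μ
      = ∑ ν : (∀ _ : Fin b, Fin (a + 1)),
          if (Antitone fun i => ((ν i : ℕ))) ∧ (∀ i, (ν i : ℕ) ≤ μ i) then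
            (MvPolynomial.rename (Sum.inl : Fin p → Fin p ⊕ Fin q)
                (skewSchur b a p μ (fun i => (ν i : ℕ)))) *
            (MvPolynomial.rename (Sum.inr : Fin q → Fin p ⊕ Fin q)
                (skewSchur a b q (transposeP b a (fun i => (ν i : ℕ))) (fun _ => 0)))
          else 0 := by
  rw [superSchur, ← sum_filter, sum_superSSYT_eq_sum_split MvPolynomial.X μ hp hq, sum_filter]
  simp only [Fintype.sum_prod_type, MvPolynomial.rename_skewSchur]
  exact Fintype.sum_sum_sum_ite_and_mul _ _ _ _ _

/-- the super Schur function decomposes as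
`s_μ(x/y) = Σ_{ν ⊆ μ} s_{μ/ν}(x) · s_{ν†}(y)`, the character identity of the
decomposition `S_μ(V₀ ⊕ V₁)ᵢ = ⊕_{ν ⊆ μ, |ν| = i} S_{μ/ν}(V₀) ⊗ S_{ν†}(V₁)`. -/
theorem superSchur_decomposition (b a p q : ℕ) (hp : 0 < p) (hq : 0 < q)
    (μ : Fin b → ℕ) (hμ : Antitone μ) (hμa : ∀ i, μ i ≤ a) :
    superSchur b a p q hp μ
      = ∑ ν : (∀ _ : Fin b, Fin (a + 1)),
          if (Antitone fun i => ((ν i : ℕ))) ∧ (∀ i, (ν i : ℕ) ≤ μ i) then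
            (MvPolynomial.rename (Sum.inl : Fin p → Fin p ⊕ Fin q)
                (skewSchur b a p μ (fun i => (ν i : ℕ)))) *
            (MvPolynomial.rename (Sum.inr : Fin q → Fin p ⊕ Fin q)
                (skewSchur a b q (transposeP b a (fun i => (ν i : ℕ))) (fun _ => 0)))
          else 0 :=
  superSchur_decomposition_general b a p q hp hq μ
end

section
/- With P_{r,s}(α,β) = (s+α₁,…,s+α_s, s^r, β₁,…,β_{ℓ(β)}) and Q_{r,s}(α,β) = (s+β†₁,…,s+β†_s, s^r, α†₁,…,α†_{α₁}) for partitions α, β with ℓ(α) ≤ s and β₁ ≤ s: both P_{r,s}(α,β) and Q_{r,s}(α,β) are partitions, |P_{r,s}(α,β)| = |Q_{r,s}(α,β)| = s(s+r) + |α| + |β|, and the assignment (α,β) ↦ (P_{r,s}(α,β), Q_{r,s}(α,β)) is injective. -/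
/-- Transpose of a partition given as `α : Fin s → ℕ`. -/
def conjA (s : ℕ) (α : Fin s → ℕ) (j : ℕ) : ℕ :=
  (Finset.univ.filter fun i : Fin s => j < α i).card

/-- Transpose of a partition `β : ℕ → ℕ` supported in `[0, L)`. -/
def conjB (L : ℕ) (β : ℕ → ℕ) (k : ℕ) : ℕ :=
  ((Finset.range L).filter fun j => k < β j).card

/-- `P_{r,s}(α,β) = (s+α₁,…,s+α_s, s^r, β₁, β₂, …)` as a function `ℕ → ℕ`. -/
def Ppart (r s : ℕ) (α : Fin s → ℕ) (β : ℕ → ℕ) (k : ℕ) : ℕ :=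
  if h : k < s then s + α ⟨k, h⟩
  else if k < s + r then s
  else β (k - (s + r))

/-- `Q_{r,s}(α,β) = (s+β†₁,…,s+β†_s, s^r, α†₁, α†₂, …)` as a function `ℕ → ℕ`. -/
def Qpart (r s L : ℕ) (α : Fin s → ℕ) (β : ℕ → ℕ) (k : ℕ) : ℕ :=
  if k < s then s + conjB L β k
  else if k < s + r then s
  else conjA s α (k - (s + r))

/-!
Both sequences are obtained from the `(s + r) × s` rectangle by gluing one partition to the
right of its first `s` rows and another one below it; for `Q` these are `β†` and `α†`. So
`Q_{r,s}(α, β) = P_{r,s}(β†, α†)`, and it suffices to show that gluing preserves antitonicity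
(the glued-below parts are at most `s`) and adds sizes, and that transposition preserves
size. Injectivity already holds for `P` alone, since `α` and `β` can be read off from it.
-/

open Finset

section CardFilter

variable {ι : Type*} (S : Finset ι) (a : ι → ℕ)

theorem antitone_card_filter_lt : Antitone fun j => #(S.filter fun i => j < a i) :=
  fun _ _ hjk => card_le_card <| monotone_filter_right S fun _ _ => lt_of_le_of_lt hjk

theorem sum_range_card_filter_lt {c : ℕ} (hc : ∀ i ∈ S, a i ≤ c) :
    ∑ j ∈ range c, #(S.filter fun i => j < a i) = ∑ i ∈ S, a i := by
  simp only [card_filter]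
  rw [sum_comm]
  refine sum_congr rfl fun i hi => ?_
  have : (range c).filter (· < a i) = range (a i) := by
    ext j
    simp only [mem_filter, mem_range]
    have := hc i hi
    omega
  rw [← card_filter, this, card_range]

end CardFilter

theorem conjA_antitone (s : ℕ) (α : Fin s → ℕ) : Antitone (conjA s α) :=
  antitone_card_filter_lt _ _

theorem conjA_le (s : ℕ) (α : Fin s → ℕ) (j : ℕ) : conjA s α j ≤ s :=
  (card_filter_le _ _).trans (card_fin s).le

theorem conjB_antitone (L : ℕ) (β : ℕ → ℕ) : Antitone (conjB L β) :=
  antitone_card_filter_lt _ _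

theorem sum_range_conjA {s c : ℕ} (α : Fin s → ℕ) (hc : ∀ i, α i ≤ c) :
    ∑ j ∈ range c, conjA s α j = ∑ i, α i :=
  sum_range_card_filter_lt _ _ fun i _ => hc i

theorem sum_conjB {s : ℕ} (L : ℕ) {β : ℕ → ℕ} (hβs : ∀ j, β j ≤ s) :
    ∑ i : Fin s, conjB L β i = ∑ j ∈ range L, β j := by
  rw [← sum_range (conjB L β)]
  exact sum_range_card_filter_lt _ _ fun j _ => hβs j

theorem Ppart_antitone {r s : ℕ} {f : Fin s → ℕ} {g : ℕ → ℕ} (hf : Antitone f)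
    (hg : Antitone g) (hgs : ∀ j, g j ≤ s) : Antitone (Ppart r s f g) := by
  intro a b hab
  have := hgs (a - (s + r))
  have := hgs (b - (s + r))
  have := hg (Nat.sub_le_sub_right hab (s + r))
  unfold Ppart
  split_ifs <;> first | omega | exact Nat.add_le_add_left (hf hab) s

theorem sum_range_Ppart (r s n : ℕ) (f : Fin s → ℕ) (g : ℕ → ℕ) :
    ∑ k ∈ range (s + r + n), Ppart r s f g k =
      s * (s + r) + ∑ i, f i + ∑ j ∈ range n, g j := by
  have rect : ∀ k ∈ range r, Ppart r s f g (s + k) = s := fun k hk => by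
    simp [Ppart, mem_range.1 hk]
  have tail : ∀ k ∈ range n, Ppart r s f g (s + r + k) = g k := fun k _ => by
    simp [Ppart, show ¬ s + r + k < s by omega]
  rw [sum_range_add, sum_range_add, sum_congr rfl tail, sum_congr rfl rect, sum_const,
    card_range, smul_eq_mul, ← Fin.sum_univ_eq_sum_range]
  simp only [Ppart, Fin.is_lt, dif_pos, sum_add_distrib, sum_const, card_univ, Fintype.card_fin,
    smul_eq_mul]
  ring

theorem Ppart_injective2 (r s : ℕ) : Function.Injective2 (Ppart r s) := by
  intro f f' g g' h
  constructor
  · funext i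
    simpa [Ppart] using congrFun h i
  · funext j
    have : ¬ s + r + j < s := by omega
    simpa [Ppart, this] using congrFun h (s + r + j)

theorem Qpart_eq_Ppart (r s L : ℕ) (α : Fin s → ℕ) (β : ℕ → ℕ) :
    Qpart r s L α β = Ppart r s (fun i => conjB L β i) (conjA s α) := by
  funext k
  unfold Qpart Ppart
  split_ifs <;> rfl

theorem PQ_partition_size_injective_general (r s L : ℕ)
    (α : Fin s → ℕ) (β : ℕ → ℕ) (hα : Antitone α) (hβ : Antitone β)
    (hβs : ∀ j, β j ≤ s) (hL : ∀ j, L ≤ j → β j = 0) :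
    Antitone (Ppart r s α β) ∧
    Antitone (Qpart r s L α β) ∧
    (∀ M : ℕ, s + r + L ≤ M →
      ∑ k ∈ Finset.range M, Ppart r s α β k =
        s * (s + r) + (∑ i, α i) + ∑ j ∈ Finset.range L, β j) ∧
    (∀ c M : ℕ, (∀ i, α i ≤ c) → s + r + c ≤ M →
      ∑ k ∈ Finset.range M, Qpart r s L α β k =
        s * (s + r) + (∑ i, α i) + ∑ j ∈ Finset.range L, β j) ∧
    (∀ (α' : Fin s → ℕ) (β' : ℕ → ℕ),
      Ppart r s α β = Ppart r s α' β' → Qpart r s L α β = Qpart r s L α' β' →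
        α = α' ∧ β = β') := by
  refine ⟨Ppart_antitone hα hβ hβs, ?_, ?_, ?_, fun α' β' hP _ => Ppart_injective2 r s hP⟩
  · rw [Qpart_eq_Ppart]
    exact Ppart_antitone ((conjB_antitone L β).comp_monotone Fin.val_strictMono.monotone)
      (conjA_antitone s α) (conjA_le s α)
  · intro M hM
    obtain ⟨n, hn, rfl⟩ : ∃ n, L ≤ n ∧ M = s + r + n := ⟨M - (s + r), by omega, by omega⟩
    rw [sum_range_Ppart, eventually_constant_sum hL hn]
  · intro c M hc hM
    obtain ⟨n, hn, rfl⟩ : ∃ n, c ≤ n ∧ M = s + r + n := ⟨M - (s + r), by omega, by omega⟩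
    rw [Qpart_eq_Ppart, sum_range_Ppart, sum_conjB L hβs,
      sum_range_conjA α fun i => (hc i).trans hn]
    ring

/-- for `α` a partition with at most `s` parts and `β` a partition with
all parts `≤ s` (supported in `[0,L)`), both `P_{r,s}(α,β)` and `Q_{r,s}(α,β)` are
partitions, both have size `s(s+r) + |α| + |β|`, and `(α,β) ↦ (P,Q)` is injective. -/
theorem PQ_partition_size_injective (r s L : ℕ) (hr : 0 < r)
    (α : Fin s → ℕ) (β : ℕ → ℕ) (hα : Antitone α) (hβ : Antitone β)
    (hβs : ∀ j, β j ≤ s) (hL : ∀ j, L ≤ j → β j = 0) :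
    Antitone (Ppart r s α β) ∧
    Antitone (Qpart r s L α β) ∧
    (∀ M : ℕ, s + r + L ≤ M →
      ∑ k ∈ Finset.range M, Ppart r s α β k =
        s * (s + r) + (∑ i, α i) + ∑ j ∈ Finset.range L, β j) ∧
    (∀ c M : ℕ, (∀ i, α i ≤ c) → s + r + c ≤ M →
      ∑ k ∈ Finset.range M, Qpart r s L α β k =
        s * (s + r) + (∑ i, α i) + ∑ j ∈ Finset.range L, β j) ∧
    (∀ (α' : Fin s → ℕ) (β' : ℕ → ℕ),
      Ppart r s α β = Ppart r s α' β' → Qpart r s L α β = Qpart r s L α' β' →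
        α = α' ∧ β = β') :=
  PQ_partition_size_injective_general r s L α β hα hβ hβs hL
end
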